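/- Suppose m and μ are Borel probability measures on a compact Riemannian manifold M, f a C¹ diffeomorphism, and m∘f^{−n} → μ weakly along every subsequence (i.e., m∘f^{−n} converges weakly to μ). Then ∫ log Jac(f) dμ ≤ 0, where Jac(f)(x) = |det d_x f|; equivalently, the averaged sums (1/n)∫ log Jac(fⁿ) dm are bounded above via Jensen's inequality by (1/n) log ∫ Jac(fⁿ) dm = (1/n) log 1 = 0. -/

import Mathlib

open MeasureTheory Filter

/-- If `m ∘ f⁻ⁿ → μ` weakly, where the Jacobian `J > 0` of `f` satisfies the change-of-variables
normalization `∫ Jac(fⁿ) dm = 1` for all `n`, then `∫ log J dμ ≤ 0`. -/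
theorem integral_log_jacobian_nonpos
    {M : Type*} [MetricSpace M] [CompactSpace M] [MeasurableSpace M] [BorelSpace M]
    (f : M → M) (hf : Continuous f)
    (m μ : Measure M) [IsProbabilityMeasure m] [IsProbabilityMeasure μ]
    (J : M → ℝ) (hJcont : Continuous J) (hJpos : ∀ x, 0 < J x)
    (hchange : ∀ n : ℕ, ∫ x, (∏ k ∈ Finset.range n, J (f^[k] x)) ∂m = 1)
    (hconv : ∀ g : C(M, ℝ),
      Tendsto (fun n : ℕ => ∫ x, g (f^[n] x) ∂m) atTop (nhds (∫ x, g x ∂μ))) :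
    ∫ x, Real.log (J x) ∂μ ≤ 0 := by
  have hM : Nonempty M := by
    by_contra h
    have : μ Set.univ = 1 := measure_univ
    rw [Set.univ_eq_empty_iff.2 (not_nonempty_iff.1 h), measure_empty] at this
    simp at this
  have hint : ∀ h : M → ℝ, Continuous h → Integrable h m := fun h hc => by
    rw [← integrableOn_univ]
    exact hc.continuousOn.integrableOn_compact isCompact_univ
  set g : C(M, ℝ) := ⟨fun x => Real.log (J x), hJcont.log fun x => (hJpos x).ne'⟩ with hg
  set a : ℕ → ℝ := fun k => ∫ x, Real.log (J (f^[k] x)) ∂m with ha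
  -- Each partial sum is ≤ 0 by Jensen's inequality.
  have hsum : ∀ n : ℕ, ∑ k ∈ Finset.range n, a k ≤ 0 := by
    intro n
    set P : M → ℝ := fun x => ∏ k ∈ Finset.range n, J (f^[k] x) with hP
    have hPcont : Continuous P := by
      apply continuous_finset_prod
      intro k _
      exact hJcont.comp (hf.iterate k)
    have hPpos : ∀ x, 0 < P x := fun x =>
      Finset.prod_pos fun k _ => hJpos _
    obtain ⟨x₀, -, hx₀⟩ := isCompact_univ.exists_isMinOn Set.univ_nonempty
      hPcont.continuousOn
    set ε : ℝ := P x₀ with hε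
    have hεpos : 0 < ε := hPpos x₀
    have hmem : ∀ x, P x ∈ Set.Ici ε := fun x => hx₀ (Set.mem_univ x)
    have hconc : ConcaveOn ℝ (Set.Ici ε) Real.log :=
      (strictConcaveOn_log_Ioi.concaveOn).subset
        (fun x hx => lt_of_lt_of_le hεpos hx) (convex_Ici ε)
    have hlogcont : ContinuousOn Real.log (Set.Ici ε) :=
      Real.continuousOn_log.mono fun x hx => by
        simp only [Set.mem_compl_iff, Set.mem_singleton_iff]
        exact (lt_of_lt_of_le hεpos hx).ne'
    have hPi : Integrable P m := hint P hPcont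
    have hlogPi : Integrable (fun x => Real.log (P x)) m :=
      hint _ (Real.continuousOn_log.comp_continuous hPcont fun x => (hPpos x).ne')
    have hjensen : ∫ x, Real.log (P x) ∂m ≤ Real.log (∫ x, P x ∂m) :=
      hconc.le_map_integral hlogcont isClosed_Ici
        (Filter.Eventually.of_forall hmem) hPi hlogPi
    rw [hchange n, Real.log_one] at hjensen
    have hswap : ∑ k ∈ Finset.range n, a k = ∫ x, Real.log (P x) ∂m := by
      have : ∀ x, Real.log (P x) = ∑ k ∈ Finset.range n, Real.log (J (f^[k] x)) := by
        intro x
        exact Real.log_prod fun k _ => (hJpos _).ne'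
      rw [integral_congr_ae (Filter.Eventually.of_forall this)]
      rw [integral_finset_sum]
      intro k _
      exact hint _ (Real.continuousOn_log.comp_continuous (hJcont.comp (hf.iterate k))
        fun x => (hJpos _).ne')
    rw [hswap]
    exact hjensen
  -- Cesàro convergence.
  have htend : Tendsto a atTop (nhds (∫ x, Real.log (J x) ∂μ)) := hconv g
  have hces := htend.cesaro
  refine le_of_tendsto hces (Filter.Eventually.of_forall fun n => ?_)
  have : (n : ℝ)⁻¹ ≥ 0 := inv_nonneg.2 (Nat.cast_nonneg n)
  calc (n : ℝ)⁻¹ • ∑ i ∈ Finset.range n, a i ≤ (n : ℝ)⁻¹ • (0 : ℝ) := by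
        exact smul_le_smul_of_nonneg_left (hsum n) this
    _ = 0 := by simp
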